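/- Let q be a prime power and n ≥ 1. The number of pairs (x, y) ∈ 𝔽_q[Y] × 𝔽_q[Y] with y monic of degree n, deg x < n, and gcd(x, y) = 1 equals q^{2n}(1 − 1/q) = q^{2n} − q^{2n−1}. -/
import Mathlib

open Polynomial

namespace Stmt2Aux

variable {F : Type*} [Field F]

/-- Pairs `(x, y)` with `y` monic of degree `n` and `deg x < n`. -/
abbrev AllP (F : Type*) [Field F] (n : ℕ) : Type _ :=
  {xy : Polynomial F × Polynomial F //
    xy.2.Monic ∧ xy.2.natDegree = n ∧ xy.1.degree < (n : WithBot ℕ)}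

/-- Coprime pairs `(x, y)` with `y` monic of degree `n` and `deg x < n`. -/
abbrev CP (F : Type*) [Field F] (n : ℕ) : Type _ :=
  {xy : Polynomial F × Polynomial F //
    xy.2.Monic ∧ xy.2.natDegree = n ∧ xy.1.degree < (n : WithBot ℕ) ∧
      IsCoprime xy.1 xy.2}

/-- Monic polynomials of degree `k`. -/
abbrev Mon (F : Type*) [Field F] (k : ℕ) : Type _ :=
  {p : Polynomial F // p.Monic ∧ p.natDegree = k}

def allEquiv (n : ℕ) : AllP F n ≃ (Polynomial.degreeLT F n × Mon F n) where
  toFun p := (⟨p.1.1, Polynomial.mem_degreeLT.2 p.2.2.2⟩, ⟨p.1.2, p.2.1, p.2.2.1⟩)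
  invFun p := ⟨(p.1.1, p.2.1), p.2.2.1, p.2.2.2, Polynomial.mem_degreeLT.1 p.1.2⟩
  left_inv _ := rfl
  right_inv _ := rfl

variable [Fintype F]

noncomputable instance (n : ℕ) : Fintype (Polynomial.degreeLT F n) :=
  Fintype.ofEquiv (Fin n → F) (Polynomial.degreeLTEquiv F n).toEquiv.symm

noncomputable instance (k : ℕ) : Fintype (Mon F k) :=
  Fintype.ofEquiv _ (Polynomial.monicEquivDegreeLT k).symm

noncomputable instance (n : ℕ) : Fintype (AllP F n) :=
  Fintype.ofEquiv _ (allEquiv n).symm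

noncomputable instance (n : ℕ) : Fintype (CP F n) :=
  Fintype.ofInjective (fun p => (⟨p.1, p.2.1, p.2.2.1, p.2.2.2.1⟩ : AllP F n))
    (by intro a b h; simp only [Subtype.mk.injEq] at h; exact Subtype.ext h)

theorem card_degreeLT (n : ℕ) : Nat.card (Polynomial.degreeLT F n) = Fintype.card F ^ n := by
  rw [Nat.card_congr (Polynomial.degreeLTEquiv F n).toEquiv]
  simp [Nat.card_eq_fintype_card]

theorem card_Mon (k : ℕ) : Nat.card (Mon F k) = Fintype.card F ^ k := by
  rw [Nat.card_congr (Polynomial.monicEquivDegreeLT k)]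
  exact card_degreeLT k

theorem card_AllP (n : ℕ) : Nat.card (AllP F n) = Fintype.card F ^ (2 * n) := by
  rw [Nat.card_congr (allEquiv n), Nat.card_prod, card_degreeLT, card_Mon, ← pow_add,
    two_mul]

theorem decomp_aux {n k : ℕ} (hk : k ≤ n) {d x y : Polynomial F} (hd : d.Monic)
    (hdk : d.natDegree = k) (hy : y.Monic) (hyn : y.natDegree = n - k)
    (hx : x.degree < ((n - k : ℕ) : WithBot ℕ)) :
    (d * y).Monic ∧ (d * y).natDegree = n ∧ (d * x).degree < (n : WithBot ℕ) := by
  refine ⟨hd.mul hy, ?_, ?_⟩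
  · rw [hd.natDegree_mul hy, hdk, hyn]; omega
  · calc (d * x).degree ≤ d.degree + x.degree := degree_mul_le _ _
      _ < (k : WithBot ℕ) + ((n - k : ℕ) : WithBot ℕ) := by
          rw [degree_eq_natDegree hd.ne_zero, hdk]
          exact WithBot.add_lt_add_left (WithBot.coe_ne_bot) hx
      _ = (n : WithBot ℕ) := by
          rw [← Nat.cast_add]
          congr 1
          omega

noncomputable def decompMap (n : ℕ) : (Σ k : Fin (n + 1), Mon F k × CP F (n - k)) → AllP F n
  | ⟨k, ⟨d, hd, hdk⟩, ⟨(x, y), hy, hyn, hx, _⟩⟩ =>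
    let h := decomp_aux (Nat.lt_succ_iff.1 k.isLt) hd hdk hy hyn hx
    ⟨(d * x, d * y), h.1, h.2.1, h.2.2⟩

theorem decompMap_bijective [DecidableEq F] (n : ℕ) :
    Function.Bijective (decompMap (F := F) n) := by
  constructor
  · rintro ⟨k, ⟨d, hd, hdk⟩, ⟨⟨x, y⟩, hy, hyn, hx, hco⟩⟩
      ⟨k', ⟨d', hd', hdk'⟩, ⟨⟨x', y'⟩, hy', hyn', hx', hco'⟩⟩ h
    simp only [decompMap, Subtype.mk.injEq, Prod.mk.injEq] at h
    obtain ⟨hxx, hyy⟩ := h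
    -- d = d'
    obtain ⟨a, b, hab⟩ := hco'
    obtain ⟨a2, b2, hab2⟩ := hco
    dsimp only at hab hab2
    have hdd' : d ∣ d' := by
      have h1 : d ∣ d' * x' := hxx ▸ Dvd.intro x rfl
      have h2 : d ∣ d' * y' := hyy ▸ Dvd.intro y rfl
      have heq : d' = d' * x' * a + d' * y' * b := by
        have h3 : d' * (a * x' + b * y') = d' * x' * a + d' * y' * b := by ring
        rw [← h3, hab, mul_one]
      rw [heq]
      exact dvd_add (h1.mul_right a) (h2.mul_right b)
    have hd'd : d' ∣ d := by
      have h1 : d' ∣ d * x := hxx ▸ Dvd.intro x' rfl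
      have h2 : d' ∣ d * y := hyy ▸ Dvd.intro y' rfl
      have heq : d = d * x * a2 + d * y * b2 := by
        have h3 : d * (a2 * x + b2 * y) = d * x * a2 + d * y * b2 := by ring
        rw [← h3, hab2, mul_one]
      rw [heq]
      exact dvd_add (h1.mul_right a2) (h2.mul_right b2)
    have hdeq : d = d' := eq_of_monic_of_associated hd hd' (associated_of_dvd_dvd hdd' hd'd)
    subst hdeq
    have hk : k = k' := Fin.ext (by rw [← hdk, ← hdk'])
    subst hk
    have hx0 : x = x' := mul_left_cancel₀ hd.ne_zero hxx
    have hy0 : y = y' := mul_left_cancel₀ hd.ne_zero hyy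
    subst hx0; subst hy0
    rfl
  · rintro ⟨⟨x, y⟩, hy, hyn, hx⟩
    have hy0 : y ≠ 0 := hy.ne_zero
    set g : Polynomial F := EuclideanDomain.gcd x y with hg
    have hg0 : g ≠ 0 := fun h => hy0 (EuclideanDomain.gcd_eq_zero_iff.1 h).2
    set d : Polynomial F := normalize g with hd'
    have hd : d.Monic := monic_normalize hg0
    have hd0 : d ≠ 0 := hd.ne_zero
    have hdg : Associated g d := associated_normalize g
    have hdx : d ∣ x := hdg.symm.dvd.trans (EuclideanDomain.gcd_dvd_left x y)
    have hdy : d ∣ y := hdg.symm.dvd.trans (EuclideanDomain.gcd_dvd_right x y)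
    obtain ⟨x1, hx1⟩ := hdx
    obtain ⟨y1, hy1⟩ := hdy
    set k : ℕ := d.natDegree with hk
    have hkn : k ≤ n := hyn ▸ natDegree_le_of_dvd ⟨y1, hy1⟩ hy0
    have hy1m : y1.Monic := hd.of_mul_monic_left (hy1 ▸ hy)
    have hy1n : y1.natDegree = n - k := by
      have := hy1 ▸ hyn
      rw [hd.natDegree_mul hy1m] at this
      omega
    have hx1d : x1.degree < ((n - k : ℕ) : WithBot ℕ) := by
      rcases eq_or_ne x1 0 with rfl | hx10
      · rw [degree_zero]; exact WithBot.bot_lt_coe _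
      · have hxne : x ≠ 0 := by rw [hx1]; exact mul_ne_zero hd0 hx10
        have : x.natDegree < n := by
          have := hx
          rwa [degree_eq_natDegree hxne, Nat.cast_lt] at this
        rw [hx1, hd.natDegree_mul' (by simp [hx10])] at this
        rw [degree_eq_natDegree hx10, Nat.cast_lt]
        omega
    have hco : IsCoprime x1 y1 := by
      refine IsRelPrime.isCoprime fun e he1 he2 => ?_
      have h1 : d * e ∣ x := hx1 ▸ mul_dvd_mul_left d he1
      have h2 : d * e ∣ y := hy1 ▸ mul_dvd_mul_left d he2
      have h3 : d * e ∣ g := EuclideanDomain.dvd_gcd h1 h2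
      have h4 : d * e ∣ d * 1 := by
        rw [mul_one]
        exact h3.trans hdg.dvd
      exact isUnit_of_dvd_one ((mul_dvd_mul_iff_left hd0).1 h4)
    refine ⟨⟨⟨k, Nat.lt_succ_of_le hkn⟩, ⟨d, hd, rfl⟩, ⟨(x1, y1), hy1m, hy1n, hx1d, hco⟩⟩, ?_⟩
    simp only [decompMap]
    exact Subtype.ext (Prod.ext hx1.symm hy1.symm)

theorem key [DecidableEq F] (n : ℕ) :
    ∑ k ∈ Finset.range (n + 1), Fintype.card F ^ k * Nat.card (CP F (n - k)) =
      Fintype.card F ^ (2 * n) := by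
  rw [← card_AllP n, ← Nat.card_eq_of_bijective _ (decompMap_bijective n),
    Nat.card_eq_fintype_card, Fintype.card_sigma]
  rw [← Fin.sum_univ_eq_sum_range (fun k => Fintype.card F ^ k * Nat.card (CP F (n - k))) (n + 1)]
  refine Finset.sum_congr rfl fun k _ => ?_
  rw [Fintype.card_prod, ← Nat.card_eq_fintype_card (α := Mon F k),
    ← Nat.card_eq_fintype_card (α := CP F (n - k)), card_Mon]

end Stmt2Aux

/-- The number of pairs `(x, y)` of polynomials over `𝔽_q` with `y` monic of degree `n`,
`deg x < n` and `gcd(x, y) = 1` is `q^{2n} - q^{2n-1}`. -/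
theorem stmt2 (q : ℕ) (hq : ∃ p k : ℕ, p.Prime ∧ 0 < k ∧ q = p ^ k)
    (Fq : Type*) [Field Fq] [Fintype Fq] (hcard : Fintype.card Fq = q)
    (n : ℕ) (hn : 1 ≤ n) :
    Nat.card {xy : Polynomial Fq × Polynomial Fq //
        xy.2.Monic ∧ xy.2.natDegree = n ∧ xy.1.degree < (n : WithBot ℕ) ∧
          IsCoprime xy.1 xy.2} = q ^ (2 * n) - q ^ (2 * n - 1) := by
  classical
  obtain ⟨m, rfl⟩ : ∃ m, n = m + 1 := ⟨n - 1, by omega⟩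
  have h1 := Stmt2Aux.key (F := Fq) (m + 1)
  have h2 := Stmt2Aux.key (F := Fq) m
  rw [hcard] at h1 h2
  rw [Finset.sum_range_succ'] at h1
  have hshift : ∀ i ∈ Finset.range (m + 1),
      q ^ (i + 1) * Nat.card (Stmt2Aux.CP Fq (m + 1 - (i + 1))) =
        q * (q ^ i * Nat.card (Stmt2Aux.CP Fq (m - i))) := by
    intro i _
    rw [pow_succ]
    have : m + 1 - (i + 1) = m - i := by omega
    rw [this]; ring
  rw [Finset.sum_congr rfl hshift, ← Finset.mul_sum, h2] at h1
  -- h1 : q * q ^ (2 * m) + q ^ 0 * Nat.card (CP Fq (m + 1)) = q ^ (2 * (m + 1))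
  have e1 : q * q ^ (2 * m) = q ^ (2 * (m + 1) - 1) := by
    rw [← pow_succ']
    congr 1
  rw [e1] at h1
  simp only [pow_zero, one_mul, Nat.sub_zero] at h1
  show Nat.card (Stmt2Aux.CP Fq (m + 1)) = q ^ (2 * (m + 1)) - q ^ (2 * (m + 1) - 1)
  omega
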